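/- arXiv:2202.09135 — 3 statements merged into one kernel-verified Lean document; each statement's English description precedes it below -/
import Mathlib

section
/- On a para-Sasaki-like Riemannian Π-manifold, the curvature tensor satisfies R(x,y)ξ = −η(y)x + η(x)y for all vector fields x, y. -/
/-- On a para-Sasaki-like Riemannian Π-manifold, the curvature tensor
`R(x,y)z = ∇_x ∇_y z − ∇_y ∇_x z − ∇_{[x,y]} z` of the Levi-Civita connection `∇` of
`g` satisfies `R(x,y)ξ = −η(y)x + η(x)y` for all vector fields `x, y`.  Vector fields
are modelled as a module `V` over the ring `F` of smooth functions, with Lie bracket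
`bracket`; `∇` is torsion-free and satisfies the para-Sasaki-like condition
`∇_x(φy) − φ(∇_x y) = −g(x,y)ξ − η(y)x + 2η(x)η(y)ξ`, whence also `∇_x ξ = φx`. -/
theorem para_sasaki_like_curvature_xi
    {F V : Type*} [CommRing F] [AddCommGroup V] [Module F V]
    (g : V →ₗ[F] V →ₗ[F] F) (phi : V →ₗ[F] V) (xi : V) (eta : V →ₗ[F] F)
    (nabla : V → V → V) (bracket : V → V → V)
    (hgsymm : ∀ x y, g x y = g y x)
    (hphixi : phi xi = 0)
    (hphi2 : ∀ x, phi (phi x) = x - eta x • xi)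
    (hetaphi : ∀ x, eta (phi x) = 0)
    (hetaxi : eta xi = 1)
    (hgphi : ∀ x y, g (phi x) y = g x (phi y))
    (hgxi : ∀ x, g x xi = eta x)
    (htorsion : ∀ x y, nabla x y - nabla y x = bracket x y)
    (hpS : ∀ x y, nabla x (phi y) - phi (nabla x y) =
      -(g x y) • xi - eta y • x + (2 * (eta x * eta y)) • xi)
    (hnablaxi : ∀ x, nabla x xi = phi x)
    (R : V → V → V → V)
    (hR : ∀ x y z, R x y z =
      nabla x (nabla y z) - nabla y (nabla x z) - nabla (bracket x y) z) :
    ∀ x y, R x y xi = -(eta y) • x + eta x • y := by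
  intro x y
  have h1 := hpS x y
  have h2 := hpS y x
  have hb := htorsion x y
  have e1 : nabla x (phi y) = phi (nabla x y) +
      (-(g x y) • xi - eta y • x + (2 * (eta x * eta y)) • xi) := by
    rw [← h1]; abel
  have e2 : nabla y (phi x) = phi (nabla y x) +
      (-(g y x) • xi - eta x • y + (2 * (eta y * eta x)) • xi) := by
    rw [← h2]; abel
  rw [hR x y xi, hnablaxi, hnablaxi, hnablaxi, ← hb, map_sub, e1, e2,
    hgsymm y x, mul_comm (eta y) (eta x)]
  module
end

section
/- On a para-Sasaki-like Riemannian Π-manifold, R(ξ, y)ξ = φ²y = y − η(y)ξ for every vector field y. -/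
/-- On a para-Sasaki-like Riemannian Π-manifold,
`R(ξ, y)ξ = φ²y = y − η(y)ξ` for every vector field `y`, where `R` is the Riemann
curvature tensor of the Levi-Civita connection `∇` of `g`.  Vector fields are modelled
as a module `V` over the ring `F` of smooth functions, with Lie bracket `bracket`;
`∇` is torsion-free, `∇_x ξ = φx`, `φ² = I − η⊗ξ`, and the para-Sasaki-like condition
`∇_x(φy) − φ(∇_x y) = −g(x,y)ξ − η(y)x + 2η(x)η(y)ξ` holds. -/
theorem para_sasaki_like_curvature_xi_y_xi
    {F V : Type*} [CommRing F] [AddCommGroup V] [Module F V]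
    (g : V →ₗ[F] V →ₗ[F] F) (phi : V →ₗ[F] V) (xi : V) (eta : V →ₗ[F] F)
    (nabla : V → V → V) (bracket : V → V → V)
    (hgsymm : ∀ x y, g x y = g y x)
    (hphixi : phi xi = 0)
    (hphi2 : ∀ x, phi (phi x) = x - eta x • xi)
    (hetaphi : ∀ x, eta (phi x) = 0)
    (hetaxi : eta xi = 1)
    (hgphi : ∀ x y, g (phi x) y = g x (phi y))
    (hgxi : ∀ x, g x xi = eta x)
    (htorsion : ∀ x y, nabla x y - nabla y x = bracket x y)
    (hpS : ∀ x y, nabla x (phi y) - phi (nabla x y) =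
      -(g x y) • xi - eta y • x + (2 * (eta x * eta y)) • xi)
    (hnablaxi : ∀ x, nabla x xi = phi x)
    (R : V → V → V → V)
    (hR : ∀ x y z, R x y z =
      nabla x (nabla y z) - nabla y (nabla x z) - nabla (bracket x y) z) :
    ∀ y, R xi y xi = phi (phi y) ∧ R xi y xi = y - eta y • xi := by
  intro y
  have hgxiy : g xi y = eta y := by rw [hgsymm, hgxi]
  -- ∇_ξ(φ y) = φ(∇_ξ y)
  have h1 : nabla xi (phi y) = phi (nabla xi y) := by
    have := hpS xi y
    rw [hgxiy, hetaxi] at this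
    have h2 : nabla xi (phi y) - phi (nabla xi y) = 0 := by
      rw [this]; module
    linear_combination (norm := module) h2
  -- ∇_y(∇_ξ ξ) = ∇_y(φ ξ) = 0
  have h2 : nabla y (nabla xi xi) = 0 := by
    have := hpS y xi
    rw [hgxi, hetaxi, hnablaxi, hphi2] at this
    have h3 : nabla y (phi xi) = 0 := by
      linear_combination (norm := module) this
    rw [hnablaxi, hphixi] at *
    exact h3
  -- bracket xi y
  have hb : bracket xi y = nabla xi y - phi y := by
    rw [← htorsion, hnablaxi]
  rw [hR, h2, hb, hnablaxi, hnablaxi, h1, map_sub]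
  exact ⟨by rw [hphi2]; module, by rw [hphi2]; module⟩
end

section
/- The 3-dimensional manifold (R³, φ, ξ, η, g) defined by the metric matrix [[cosh 2x³, sinh 2x³, 0],[sinh 2x³, cosh 2x³, 0],[0,0,1]] and structure φ∂₁ = ∂₂, φ∂₂ = ∂₁, ξ = ∂₃, η = dx³ satisfies the para-Sasaki-like condition (∇_x φ)y = −g(x,y)ξ − η(y)x + 2η(x)η(y)ξ, where ∇ is the Levi-Civita connection of g. -/
open Matrix Real

/-- The metric matrix on `ℝ³` at `x`:
`[[cosh 2x³, sinh 2x³, 0],[sinh 2x³, cosh 2x³, 0],[0,0,1]]`. -/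
noncomputable def exMetric (x : Fin 3 → ℝ) : Matrix (Fin 3) (Fin 3) ℝ :=
  !![Real.cosh (2 * x 2), Real.sinh (2 * x 2), 0;
     Real.sinh (2 * x 2), Real.cosh (2 * x 2), 0;
     0, 0, 1]

/-- The structure tensor `φ`: `φ∂₁ = ∂₂`, `φ∂₂ = ∂₁`, `φ∂₃ = 0`. -/
def exPhi : Matrix (Fin 3) (Fin 3) ℝ := !![0, 1, 0; 1, 0, 0; 0, 0, 0]

/-- The Reeb vector field `ξ = ∂₃`. -/
def exXi : Fin 3 → ℝ := ![0, 0, 1]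

/-- The partial derivative `∂_i h` of a function on `ℝ³`. -/
noncomputable def pd (i : Fin 3) (h : (Fin 3 → ℝ) → ℝ) (x : Fin 3 → ℝ) : ℝ :=
  fderiv ℝ h x (Pi.single i 1)

/-- The Christoffel symbols `Γ^k_{ij} = ½ g^{kl}(∂_i g_{lj} + ∂_j g_{li} − ∂_l g_{ij})`
of the Levi-Civita connection of `exMetric`. -/
noncomputable def Gamma (k i j : Fin 3) (x : Fin 3 → ℝ) : ℝ :=
  (1 / 2) * ∑ l : Fin 3, (exMetric x)⁻¹ k l *
    (pd i (fun y => exMetric y l j) x + pd j (fun y => exMetric y l i) x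
      - pd l (fun y => exMetric y i j) x)

/-- The Levi-Civita covariant derivative `(∇_X Y)^k = X(Y^k) + Γ^k_{ij} X^i Y^j`. -/
noncomputable def covDeriv (X Y : (Fin 3 → ℝ) → Fin 3 → ℝ) (x : Fin 3 → ℝ) :
    Fin 3 → ℝ :=
  fun k => fderiv ℝ (fun y => Y y k) x (X x)
    + ∑ i : Fin 3, ∑ j : Fin 3, Gamma k i j x * X x i * Y x j

lemma pd_comp (f : ℝ → ℝ) (hf : Differentiable ℝ f) (i : Fin 3) (x : Fin 3 → ℝ) :
    pd i (fun y => f (y 2)) x = deriv f (x 2) * (Pi.single i 1 : Fin 3 → ℝ) 2 := by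
  have hp : HasFDerivAt (fun y : Fin 3 → ℝ => y 2)
      (ContinuousLinearMap.proj (R := ℝ) (φ := fun _ : Fin 3 => ℝ) 2) x :=
    (ContinuousLinearMap.proj (R := ℝ) (φ := fun _ : Fin 3 => ℝ) 2).hasFDerivAt
  have := ((hf (x 2)).hasDerivAt).comp_hasFDerivAt x hp
  rw [pd, show (fun y : Fin 3 → ℝ => f (y 2)) = f ∘ (fun y => y 2) from rfl, this.fderiv]
  simp [mul_comm]

lemma pd_cosh (i : Fin 3) (x : Fin 3 → ℝ) :
    pd i (fun y => Real.cosh (2 * y 2)) x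
      = 2 * Real.sinh (2 * x 2) * (Pi.single i 1 : Fin 3 → ℝ) 2 := by
  rw [pd_comp (fun t => Real.cosh (2*t)) (by fun_prop) i x]
  congr 1
  rw [show (fun t => Real.cosh (2*t)) = Real.cosh ∘ (fun t => 2*t) from rfl,
    deriv_comp _ (Real.differentiable_cosh _) (by fun_prop)]
  simp [mul_comm]

lemma pd_sinh (i : Fin 3) (x : Fin 3 → ℝ) :
    pd i (fun y => Real.sinh (2 * y 2)) x
      = 2 * Real.cosh (2 * x 2) * (Pi.single i 1 : Fin 3 → ℝ) 2 := by
  rw [pd_comp (fun t => Real.sinh (2*t)) (by fun_prop) i x]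
  congr 1
  rw [show (fun t => Real.sinh (2*t)) = Real.sinh ∘ (fun t => 2*t) from rfl,
    deriv_comp _ (Real.differentiable_sinh _) (by fun_prop)]
  simp [mul_comm]

lemma pd_const (i : Fin 3) (x : Fin 3 → ℝ) (c : ℝ) : pd i (fun _ => c) x = 0 := by
  simp [pd]

lemma exMetric_inv (x : Fin 3 → ℝ) :
    (exMetric x)⁻¹ = !![Real.cosh (2 * x 2), -Real.sinh (2 * x 2), 0;
      -Real.sinh (2 * x 2), Real.cosh (2 * x 2), 0; 0, 0, 1] := by
  have h := Real.cosh_sq_sub_sinh_sq (2 * x 2)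
  apply Matrix.inv_eq_right_inv
  ext i j
  fin_cases i <;> fin_cases j <;>
    simp [exMetric, Matrix.mul_apply, Fin.sum_univ_three] <;> nlinarith [h]

lemma exMetric_inv' (x : Fin 3 → ℝ) :
    (!![Real.cosh (2 * x 2), Real.sinh (2 * x 2), 0;
       Real.sinh (2 * x 2), Real.cosh (2 * x 2), 0;
       0, 0, 1] : Matrix (Fin 3) (Fin 3) ℝ)⁻¹
      = !![Real.cosh (2 * x 2), -Real.sinh (2 * x 2), 0;
      -Real.sinh (2 * x 2), Real.cosh (2 * x 2), 0; 0, 0, 1] :=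
  exMetric_inv x

lemma Gamma_apply (k i j : Fin 3) (x : Fin 3 → ℝ) : _root_.Gamma k i j x =
    !![(0:ℝ),0,0; 0,0,1; 0,1,0] i j * (if k = 0 then 1 else 0)
    + !![(0:ℝ),0,1; 0,0,0; 1,0,0] i j * (if k = 1 then 1 else 0)
    + !![-Real.sinh (2*x 2), -Real.cosh (2*x 2), 0;
         -Real.cosh (2*x 2), -Real.sinh (2*x 2), 0;
         0,0,0] i j * (if k = 2 then 1 else 0) := by
  have h := Real.cosh_sq_sub_sinh_sq (2 * x 2)
  fin_cases k <;> fin_cases i <;> fin_cases j <;>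
    simp [_root_.Gamma, Fin.sum_univ_three, exMetric_inv, exMetric_inv', exMetric, pd_cosh,
      pd_sinh, pd_const, Pi.single_apply, Matrix.vecHead, Matrix.vecTail] <;> nlinarith [h]

/-- The 3-dimensional manifold `(ℝ³, φ, ξ, η, g)` defined by the
metric above and the structure `φ∂₁ = ∂₂`, `φ∂₂ = ∂₁`, `ξ = ∂₃`, `η = dx³` is
para-Sasaki-like: its Levi-Civita connection `∇` satisfies
`(∇_X φ)Y = ∇_X(φY) − φ(∇_X Y) = −g(X,Y)ξ − η(Y)X + 2η(X)η(Y)ξ`. -/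
theorem exMetric_para_sasaki_like
    (X Y : (Fin 3 → ℝ) → Fin 3 → ℝ)
    (hX : Differentiable ℝ X) (hY : Differentiable ℝ Y) :
    ∀ x : Fin 3 → ℝ,
      covDeriv X (fun y => exPhi *ᵥ Y y) x - exPhi *ᵥ covDeriv X Y x =
        -(X x ⬝ᵥ (exMetric x *ᵥ Y x)) • exXi - Y x 2 • X x
          + (2 * X x 2 * Y x 2) • exXi := by
  intro x
  funext k
  fin_cases k <;>
    simp [covDeriv, Gamma_apply, Fin.sum_univ_three, exPhi, exXi, exMetric,
      Matrix.mulVec, dotProduct, Matrix.vecHead, Matrix.vecTail] <;> ring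
end
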